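/- Suppose every lower adjoint in S is intensive, i.e., f(M) ⊆ M for all ⟨f, g⟩ ∈ S and all M ∈ L^Y. Then for every set Σ of FAIs and all A, B ∈ L^Y: Σ ⊨^S A ⇒ B if and only if Σ ∪ {0_Y ⇒ A} ⊨^S 0_Y ⇒ B, where 0_Y ∈ L^Y is the empty L-set given by 0_Y(y) = 0 for all y ∈ Y. -/

import Mathlib

/-- A complete residuated lattice: a complete lattice with a commutative, associative
multiplication whose neutral element is the top element and which distributes over
arbitrary suprema. -/
class CompleteResiduatedLattice (L : Type*) extends CompleteLattice L, CommMonoid L where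
  mul_sSup : ∀ (a : L) (s : Set L), a * sSup s = ⨆ b ∈ s, a * b
  one_eq_top : (1 : L) = ⊤

namespace FAIparam

variable {L : Type*} {Y : Type*} {X : Type*}

/-- A fuzzy attribute implication (FAI): a pair (antecedent, consequent) of L-sets in Y. -/
abbrev FAI (L Y : Type*) := (Y → L) × (Y → L)

/-- A pair of operators on L-sets in Y. -/
abbrev OpPair (L Y : Type*) := ((Y → L) → (Y → L)) × ((Y → L) → (Y → L))

/-- S is a parameterization: every pair in S is a monotone Galois connection, the identity
pair belongs to S, and S is closed under composition ⟨f₁,g₁⟩∘⟨f₂,g₂⟩ = ⟨f₁∘f₂, g₂∘g₁⟩. -/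
def IsParam [CompleteResiduatedLattice L] (S : Set (OpPair L Y)) : Prop :=
  (∀ p ∈ S, ∀ A B : Y → L, p.1 A ≤ B ↔ A ≤ p.2 B) ∧
  (((id, id) : OpPair L Y) ∈ S) ∧
  (∀ p ∈ S, ∀ q ∈ S, ((p.1 ∘ q.1, q.2 ∘ p.2) : OpPair L Y) ∈ S)

/-- M ⊨^S A ⇒ B : for every ⟨f,g⟩ ∈ S, f(A) ⊆ M implies f(B) ⊆ M. -/
def Sat [CompleteResiduatedLattice L] (S : Set (OpPair L Y)) (M : Y → L) (φ : FAI L Y) : Prop :=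
  ∀ p ∈ S, p.1 φ.1 ≤ M → p.1 φ.2 ≤ M

/-- The set Mod^S(Th) of S-models of a theory Th. -/
def ModS [CompleteResiduatedLattice L] (S : Set (OpPair L Y)) (Th : Set (FAI L Y)) :
    Set (Y → L) :=
  {M | ∀ φ ∈ Th, Sat S M φ}

/-- Semantic entailment Th ⊨^S φ, i.e. Mod^S(Th) ⊆ Mod^S({φ}). -/
def Entails [CompleteResiduatedLattice L] (S : Set (OpPair L Y)) (Th : Set (FAI L Y))
    (φ : FAI L Y) : Prop :=
  ModS S Th ⊆ ModS S {φ}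

/-- [A]^S_Th : the least S-model of Th containing A (intersection of all such models). -/
def clS [CompleteResiduatedLattice L] (S : Set (OpPair L Y)) (Th : Set (FAI L Y))
    (A : Y → L) : Y → L :=
  sInf {M | M ∈ ModS S Th ∧ A ≤ M}

/-- S-closure operator on L^Y. -/
def IsSClosureOp [CompleteResiduatedLattice L] (S : Set (OpPair L Y))
    (c : (Y → L) → (Y → L)) : Prop :=
  (∀ A, A ≤ c A) ∧ (∀ A B, A ≤ B → c A ≤ c B) ∧
  (∀ p ∈ S, ∀ A, c (p.2 (c A)) ≤ p.2 (c A))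

/-- S-closure system in ⟨L^Y, ⊆⟩. -/
def IsSClosureSys [CompleteResiduatedLattice L] (S : Set (OpPair L Y))
    (𝒮 : Set (Y → L)) : Prop :=
  (∀ T ⊆ 𝒮, sInf T ∈ 𝒮) ∧ (∀ p ∈ S, ∀ M ∈ 𝒮, p.2 M ∈ 𝒮)

/-- c_𝒮(A) = ⋂{B ∈ 𝒮 : A ⊆ B}. -/
def clSys [CompleteResiduatedLattice L] (𝒮 : Set (Y → L)) (A : Y → L) : Y → L :=
  sInf {B | B ∈ 𝒮 ∧ A ≤ B}

/-- I ⊨^S A ⇒ B for an L-context ⟨X,Y,I⟩ (with I curried, I x = I_x). -/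
def CtxSat [CompleteResiduatedLattice L] (S : Set (OpPair L Y)) (I : X → Y → L)
    (φ : FAI L Y) : Prop :=
  ∀ x, Sat S (I x) φ

/-- S_g : the set of upper adjoints occurring in S. -/
def Sg [CompleteResiduatedLattice L] (S : Set (OpPair L Y)) : Set ((Y → L) → (Y → L)) :=
  {g | ∃ f, (f, g) ∈ S}

/-- F^↑ = ⋂{g(I_x) : ⟨x,g⟩ ∈ F}. -/
def upOp [CompleteResiduatedLattice L] (I : X → Y → L)
    (F : Set (X × ((Y → L) → (Y → L)))) : Y → L :=
  ⨅ xg ∈ F, xg.2 (I xg.1)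

/-- G^↓ = {⟨x,g⟩ ∈ X × S_g : G ⊆ g(I_x)}. -/
def downOp [CompleteResiduatedLattice L] (S : Set (OpPair L Y)) (I : X → Y → L)
    (G : Y → L) : Set (X × ((Y → L) → (Y → L))) :=
  {xg | xg.2 ∈ Sg S ∧ G ≤ xg.2 (I xg.1)}

/-- G^{↓↑} = ⋂{g(I_x) : x ∈ X, ⟨f,g⟩ ∈ S, G ⊆ g(I_x)}. -/
def dnup [CompleteResiduatedLattice L] (S : Set (OpPair L Y)) (I : X → Y → L)
    (G : Y → L) : Y → L :=
  upOp I (downOp S I G)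

/-- Σ is S-complete in ⟨X,Y,I⟩. -/
def SComplete [CompleteResiduatedLattice L] (S : Set (OpPair L Y)) (Th : Set (FAI L Y))
    (I : X → Y → L) : Prop :=
  ∀ A B : Y → L, Entails S Th (A, B) ↔ CtxSat S I (A, B)

/-- Σ is an S-base of ⟨X,Y,I⟩. -/
def SBase [CompleteResiduatedLattice L] (S : Set (OpPair L Y)) (Th : Set (FAI L Y))
    (I : X → Y → L) : Prop :=
  SComplete S Th I ∧ ∀ Th' ⊂ Th, ¬ SComplete S Th' I

/-- S-provability: axioms A∪B ⇒ A, assumptions from Th, rule (Cut) and rule (F). -/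
inductive ProvS [CompleteResiduatedLattice L] (S : Set (OpPair L Y)) (Th : Set (FAI L Y)) :
    FAI L Y → Prop
  | ax (A B : Y → L) : ProvS S Th (A ⊔ B, A)
  | hyp {φ : FAI L Y} (h : φ ∈ Th) : ProvS S Th φ
  | cut {A B C D : Y → L} : ProvS S Th (A, B) → ProvS S Th (B ⊔ C, D) → ProvS S Th (A ⊔ C, D)
  | mul {A B : Y → L} {p : OpPair L Y} (hp : p ∈ S) : ProvS S Th (A, B) → ProvS S Th (p.1 A, p.1 B)

/-- Provability using the axioms and (Cut) as the only inference rule. -/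
inductive ProvCut [CompleteResiduatedLattice L] (Th : Set (FAI L Y)) : FAI L Y → Prop
  | ax (A B : Y → L) : ProvCut Th (A ⊔ B, A)
  | hyp {φ : FAI L Y} (h : φ ∈ Th) : ProvCut Th φ
  | cut {A B C D : Y → L} : ProvCut Th (A, B) → ProvCut Th (B ⊔ C, D) → ProvCut Th (A ⊔ C, D)

/-- Residuum a → b = ⋁{c : a ⊗ c ≤ b}. -/
def resid [CompleteResiduatedLattice L] (a b : L) : L := sSup {c | a * c ≤ b}

/-- Subsethood degree S(A,B) = ⋀_{y∈Y} (A(y) → B(y)). -/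
def subDeg [CompleteResiduatedLattice L] (A B : Y → L) : L := ⨅ y, resid (A y) (B y)

/-- c ⊗ B, pointwise. -/
def scMul [CompleteResiduatedLattice L] (c : L) (B : Y → L) : Y → L := fun y => c * B y

/-- ||A ⇒ B||^S_M = ⋁{c ∈ L : M ⊨^S A ⇒ c ⊗ B}. -/
def truthDeg [CompleteResiduatedLattice L] (S : Set (OpPair L Y)) (M A B : Y → L) : L :=
  sSup {c | Sat S M (A, scMul c B)}

/-- ||A ⇒ B||^S_Th = ⋀_{M ∈ Mod^S(Th)} ||A ⇒ B||^S_M. -/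
def entDeg [CompleteResiduatedLattice L] (S : Set (OpPair L Y)) (Th : Set (FAI L Y))
    (A B : Y → L) : L :=
  ⨅ M ∈ ModS S Th, truthDeg S M A B

/-- Immediate consequence operator t^S_Th. -/
def tOp [CompleteResiduatedLattice L] (S : Set (OpPair L Y)) (Th : Set (FAI L Y))
    (M : Y → L) : Y → L :=
  M ⊔ sSup {N | ∃ φ ∈ Th, ∃ p ∈ S, p.1 φ.1 ≤ M ∧ N = p.1 φ.2}

/-- S-pseudo-intents, defined by well-founded recursion on ⊊ (L^Y is finite). -/
noncomputable def IsPseudoIntent [CompleteResiduatedLattice L] [Finite L] [Finite Y]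
    (dn : (Y → L) → (Y → L)) : (Y → L) → Prop :=
  (wellFounded_lt (α := Y → L)).fix
    (fun P rec => P < dn P ∧ ∀ Q, ∀ h : Q < P, rec Q h → dn Q ≤ P)


/-!
Since ⟨id, id⟩ ∈ S, the entailment Th ⊨^S A ⇒ B holds iff every S-model of Th containing A
contains B: for ⟨f, g⟩ ∈ S, closure of S under composition makes g(M) a model of Th whenever
M is one, and f(A) ⊆ M iff A ⊆ g(M). When every f is intensive, M ⊨^S 0_Y ⇒ A just says
A ⊆ M, so both sides of the deduction theorem express the same condition.
-/

section

variable {L Y : Type*} [CompleteResiduatedLattice L] {S : Set (OpPair L Y)}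

theorem IsParam.galoisConnection (hS : IsParam S) {p : OpPair L Y} (hp : p ∈ S) :
    GaloisConnection p.1 p.2 :=
  hS.1 p hp

theorem IsParam.le_of_sat (hS : IsParam S) {M A B : Y → L} (h : Sat S M (A, B)) (hA : A ≤ M) :
    B ≤ M :=
  h (id, id) hS.2.1 hA

theorem sat_bot_iff_le (hS : IsParam S) (hint : ∀ p ∈ S, ∀ M : Y → L, p.1 M ≤ M)
    {M A : Y → L} : Sat S M (⊥, A) ↔ A ≤ M :=
  ⟨fun h => hS.le_of_sat h bot_le, fun hA p hp _ => (hint p hp A).trans hA⟩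

theorem mem_modS_singleton {M : Y → L} {φ : FAI L Y} : M ∈ ModS S {φ} ↔ Sat S M φ := by
  simp [ModS]

theorem modS_union (Th Th' : Set (FAI L Y)) :
    ModS S (Th ∪ Th') = ModS S Th ∩ ModS S Th' := by
  ext M
  simp [ModS, or_imp, forall_and]

theorem entails_iff {Th : Set (FAI L Y)} {φ : FAI L Y} :
    Entails S Th φ ↔ ∀ M ∈ ModS S Th, Sat S M φ := by
  simp only [Entails, Set.subset_def, mem_modS_singleton]

theorem IsParam.snd_mem_modS (hS : IsParam S) {Th : Set (FAI L Y)} {M : Y → L}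
    (hM : M ∈ ModS S Th) {p : OpPair L Y} (hp : p ∈ S) : p.2 M ∈ ModS S Th := by
  intro φ hφ q hq hqM
  have gc := hS.galoisConnection hp
  exact gc.le_iff_le.1 (hM φ hφ _ (hS.2.2 p hp q hq) (gc.le_iff_le.2 hqM))

theorem IsParam.entails_iff_forall_le (hS : IsParam S) {Th : Set (FAI L Y)} {A B : Y → L} :
    Entails S Th (A, B) ↔ ∀ M ∈ ModS S Th, A ≤ M → B ≤ M := by
  refine ⟨fun h M hM => hS.le_of_sat (entails_iff.1 h M hM), fun h => ?_⟩
  refine entails_iff.2 fun M hM p hp hpA => ?_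
  have gc := hS.galoisConnection hp
  exact gc.le_iff_le.2 (h _ (hS.snd_mem_modS hM hp) (gc.le_iff_le.1 hpA))

end

theorem semantic_deduction_general
    {L Y : Type*} [CompleteResiduatedLattice L]
    (S : Set (OpPair L Y)) (hS : IsParam S)
    (hint : ∀ p ∈ S, ∀ M : Y → L, p.1 M ≤ M)
    (Th : Set (FAI L Y)) (A B : Y → L) :
    Entails S Th (A, B) ↔
      Entails S (Th ∪ {((⊥ : Y → L), A)}) ((⊥ : Y → L), B) := by
  simp only [hS.entails_iff_forall_le, modS_union, Set.mem_inter_iff, mem_modS_singleton,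
    sat_bot_iff_le hS hint, bot_le, and_imp, forall_const]

/-- semantic deduction theorem under the assumption that all lower
adjoints in S are intensive. -/
theorem semantic_deduction
    {L Y : Type*} [CompleteResiduatedLattice L] [Nonempty Y]
    (S : Set (OpPair L Y)) (hS : IsParam S)
    (hint : ∀ p ∈ S, ∀ M : Y → L, p.1 M ≤ M)
    (Th : Set (FAI L Y)) (A B : Y → L) :
    Entails S Th (A, B) ↔
      Entails S (Th ∪ {((⊥ : Y → L), A)}) ((⊥ : Y → L), B) :=
  semantic_deduction_general S hS hint Th A B

end FAIparam
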